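/- Let n ≥ 1 and 1 ≤ σ ≤ n be natural numbers. Let f : Fin n → Fin n be a bijection, and let s : Fin n → Fin σ be a monotone (nondecreasing) surjective function (assigning each k-mer index to its string). Define A = { i : 1 ≤ i ≤ n − 1, s(i) = s(i+1) and f(i+1) = f(i) + 1 }. Then |A| ≤ n − σ; consequently, with ε = 1 − |A|/n and α = (σ − 1)/n, one has ε ≥ α + 1/n. -/

import Mathlib

/-!
An index `i ∈ A` has `i + 1` in the same string as `i`. The last index of each of the `σ`
strings has no such successor, so at least `σ` of the `n` indices lie outside `A`, i.e.
`|A| ≤ n - σ`; the bound on `ε` is this inequality divided by `n`.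
-/

open Finset

def Fin.sameAsNext {n : ℕ} {β : Type*} [DecidableEq β] (s : Fin n → β) : Finset (Fin n) :=
  {i | ∃ h : (i : ℕ) + 1 < n, s i = s ⟨(i : ℕ) + 1, h⟩}

namespace Fin

variable {n : ℕ} {β : Type*} [DecidableEq β]

-- The witness is the largest index of the fibre of `s i`.
theorem exists_eq_notMem_sameAsNext (s : Fin n → β) (i : Fin n) :
    ∃ j ∉ sameAsNext s, s j = s i := by
  have hfibre : ({j | s j = s i} : Finset (Fin n)).Nonempty := ⟨i, by simp⟩
  set j := ({j | s j = s i} : Finset (Fin n)).max' hfibre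
  have hj : s j = s i := by simpa using max'_mem _ hfibre
  refine ⟨j, fun hmem => ?_, hj⟩
  obtain ⟨hlt, hsucc⟩ : ∃ h : (j : ℕ) + 1 < n, s j = s ⟨(j : ℕ) + 1, h⟩ := by
    simpa [sameAsNext] using hmem
  have : (⟨(j : ℕ) + 1, hlt⟩ : Fin n) ≤ j := le_max' _ _ (by simp [← hsucc, hj])
  exact absurd this (by simp [Fin.le_def])

theorem card_image_add_card_sameAsNext_le (s : Fin n → β) :
    #(univ.image s) + #(sameAsNext s) ≤ n := by
  have himage : univ.image s ⊆ (sameAsNext s)ᶜ.image s := by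
    intro b hb
    obtain ⟨i, -, rfl⟩ := mem_image.mp hb
    obtain ⟨j, hj, hji⟩ := exists_eq_notMem_sameAsNext s i
    exact mem_image.mpr ⟨j, mem_compl.mpr hj, hji⟩
  have hcompl := (card_le_card himage).trans card_image_le
  have hle := card_le_univ (sameAsNext s)
  rw [card_compl, Fintype.card_fin] at hcompl
  rw [Fintype.card_fin] at hle
  omega

end Fin

theorem epsilon_ge_alpha_plus_inv_n_general (n σ : ℕ)
    (f : Fin n → Fin n)
    (s : Fin n → Fin σ) (hsurj : Function.Surjective s)
    (A : Finset (Fin n))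
    (hA : ∀ i : Fin n, i ∈ A ↔ ∃ h : (i : ℕ) + 1 < n,
      s i = s ⟨(i : ℕ) + 1, h⟩ ∧ (f ⟨(i : ℕ) + 1, h⟩ : ℕ) = (f i : ℕ) + 1) :
    A.card ≤ n - σ ∧
    1 - (A.card : ℝ) / n ≥ ((σ : ℝ) - 1) / n + 1 / n := by
  have hA_sub : A ⊆ Fin.sameAsNext s := fun i hi => by
    obtain ⟨h, hs, -⟩ := (hA i).mp hi
    simpa [Fin.sameAsNext] using ⟨h, hs⟩
  have hcount : σ + #A ≤ n := by
    have hs := Fin.card_image_add_card_sameAsNext_le s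
    rw [image_univ_of_surjective hsurj, card_univ, Fintype.card_fin] at hs
    have := card_le_card hA_sub
    omega
  refine ⟨by omega, ?_⟩
  have hreal : ((σ + #A : ℕ) : ℝ) / n ≤ 1 :=
    div_le_one_of_le₀ (by exact_mod_cast hcount) n.cast_nonneg
  push_cast at hreal
  rw [ge_iff_le, ← add_div, sub_add_cancel, le_sub_iff_add_le, ← add_div]
  exact hreal

/-- Section 2 of the paper: `ε ≥ α + 1/n`: let `f : Fin n → Fin n` be
a bijection (a MPHF on the `n` k-mers) and `s : Fin n → Fin σ` a monotone surjection
(assigning each k-mer index to its string, `σ = |S|`). If `A` is the set of indices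
`i` such that `i` and `i+1` lie in the same string and `f(i+1) = f(i) + 1`, then
`|A| ≤ n − σ`; consequently `ε = 1 − |A|/n` satisfies `ε ≥ α + 1/n` where
`α = (σ − 1)/n` is the fragmentation factor. -/
theorem epsilon_ge_alpha_plus_inv_n (n σ : ℕ) (hσ1 : 1 ≤ σ) (hσn : σ ≤ n)
    (f : Fin n → Fin n) (hf : Function.Bijective f)
    (s : Fin n → Fin σ) (hmono : Monotone s) (hsurj : Function.Surjective s)
    (A : Finset (Fin n))
    (hA : ∀ i : Fin n, i ∈ A ↔ ∃ h : (i : ℕ) + 1 < n,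
      s i = s ⟨(i : ℕ) + 1, h⟩ ∧ (f ⟨(i : ℕ) + 1, h⟩ : ℕ) = (f i : ℕ) + 1) :
    A.card ≤ n - σ ∧
    1 - (A.card : ℝ) / n ≥ ((σ : ℝ) - 1) / n + 1 / n :=
  epsilon_ge_alpha_plus_inv_n_general n σ f s hsurj A hA
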